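/- Let P = {p₁,…,p₆} be the poset with relations generated by p₁ ≼ p₂, p₂ ≼ p₃, p₂ ≼ p₄, p₃ ≼ p₅ and p₄ ≼ p₆. Then F = E*_{p₁,p₅} + E*_{p₁,p₆} + E*_{p₂,p₃} + E*_{p₂,p₄} + E*_{p₂,p₆} is a Frobenius functional on g_A(P), and the spectrum of g_A(P) is binary: ad(F̂) has eigenvalue 0 with multiplicity 8 and eigenvalue 1 with multiplicity 8. -/

import Mathlib

/-!
Common definitions: for a finite poset `P`, identified with `{1,…,n}` via a linear
extension, represented by a relation `le` on `Fin n`, the type-A Lie poset algebra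
`gA le` is the Lie subalgebra of `sl(n, ℂ)` spanned by the matrix units `E p q`
for `p ≺ q` together with all trace-zero diagonal matrices (here realized as a
submodule of complex `n × n` matrices, which is closed under the commutator
bracket).  `gFull le` is the full Lie poset algebra `g(P)` (with all diagonal
matrices).  `FS S` is the functional `F_S = ∑_{(p,q) ∈ S} E*_{p,q}`.
-/

namespace LiePosets

noncomputable section

open scoped BigOperators

/-- Complex `n × n` matrices. -/
abbrev M (n : ℕ) : Type := Matrix (Fin n) (Fin n) ℂ

/-- The strict relation `p ≺ q` attached to a poset relation `le`. -/
def Strict {n : ℕ} (le : Fin n → Fin n → Prop) (p q : Fin n) : Prop := le p q ∧ p ≠ q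

/-- The type-A Lie poset algebra `g_A(P)`: trace-zero matrices supported on
relations of the poset (off-diagonal entries vanish off the strict relations). -/
def gA {n : ℕ} (le : Fin n → Fin n → Prop) : Submodule ℂ (M n) where
  carrier := {A | Matrix.trace A = 0 ∧ ∀ p q : Fin n, p ≠ q → ¬ le p q → A p q = 0}
  add_mem' := by
    rintro A B ⟨hA, hA'⟩ ⟨hB, hB'⟩
    exact ⟨by simp [hA, hB], fun p q h1 h2 => by
      simp [Matrix.add_apply, hA' p q h1 h2, hB' p q h1 h2]⟩
  zero_mem' := ⟨by simp, fun p q _ _ => by simp⟩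
  smul_mem' := by
    rintro c A ⟨hA, hA'⟩
    exact ⟨by simp [hA], fun p q h1 h2 => by
      simp [Matrix.smul_apply, hA' p q h1 h2]⟩

/-- The Lie poset algebra `g(P)` (all diagonal matrices allowed). -/
def gFull {n : ℕ} (le : Fin n → Fin n → Prop) : Submodule ℂ (M n) where
  carrier := {A | ∀ p q : Fin n, p ≠ q → ¬ le p q → A p q = 0}
  add_mem' := by
    rintro A B hA hB p q h1 h2
    simp [Matrix.add_apply, hA p q h1 h2, hB p q h1 h2]
  zero_mem' := fun p q _ _ => by simp
  smul_mem' := by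
    rintro c A hA p q h1 h2
    simp [Matrix.smul_apply, hA p q h1 h2]

/-- The functional `F_S = ∑_{(p,q) ∈ S} E*_{p,q}` reading off the sum of the
coefficients of the matrix entries indexed by `S`. -/
def FS {n : ℕ} (S : Finset (Fin n × Fin n)) : M n →ₗ[ℂ] ℂ where
  toFun A := ∑ pq ∈ S, A pq.1 pq.2
  map_add' A B := by simp [Matrix.add_apply, Finset.sum_add_distrib]
  map_smul' c A := by simp [Matrix.smul_apply, Finset.mul_sum]

/-- `F` is a Frobenius functional on the Lie subalgebra (submodule) `g`:
the kernel of the Kirillov form `B_F(x, y) = F ⁅x, y⁆` on `g` is trivial. -/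
def IsFrobeniusOn {n : ℕ} (g : Submodule ℂ (M n)) (F : M n →ₗ[ℂ] ℂ) : Prop :=
  ∀ x ∈ g, (∀ y ∈ g, F ⁅x, y⁆ = 0) → x = 0

/-- `H` is a principal element for `F` on `g`:  `B_F(H, ·) = F` on `g`. -/
def IsPrincipal {n : ℕ} (g : Submodule ℂ (M n)) (F : M n →ₗ[ℂ] ℂ) (H : M n) : Prop :=
  H ∈ g ∧ ∀ y ∈ g, F ⁅H, y⁆ = F y

/-- The adjoint action `ad H = ⁅H, -⁆` as a linear endomorphism of matrices. -/
def adE {n : ℕ} (H : M n) : Module.End ℂ (M n) :=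
  LinearMap.mulLeft ℂ H - LinearMap.mulRight ℂ H

/-- Multiplicity of `μ` as an eigenvalue of `ad H` acting on `g`. -/
def eigMult {n : ℕ} (g : Submodule ℂ (M n)) (H : M n) (μ : ℂ) : ℕ :=
  Module.finrank ℂ ↥(g ⊓ Module.End.eigenspace (adE H) μ)

/-- `g` has a binary spectrum: for any Frobenius functional `F` and corresponding
principal element `H`, the multiset of eigenvalues of `ad H` on `g` consists of an
equal number of `0`'s and `1`'s. -/
def HasBinarySpectrum {n : ℕ} (g : Submodule ℂ (M n)) : Prop :=
  ∀ (F : M n →ₗ[ℂ] ℂ) (H : M n), IsFrobeniusOn g F → IsPrincipal g F H →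
    eigMult g H 0 = eigMult g H 1 ∧
    eigMult g H 0 + eigMult g H 1 = Module.finrank ℂ ↥g

/-- The kernel of the Kirillov form `B_F` on `g`. -/
def kirKer {n : ℕ} (g : Submodule ℂ (M n)) (F : M n →ₗ[ℂ] ℂ) : Submodule ℂ (M n) where
  carrier := {x | x ∈ g ∧ ∀ y ∈ g, F ⁅x, y⁆ = 0}
  zero_mem' := ⟨g.zero_mem, fun y _ => by rw [Ring.lie_def, zero_mul, mul_zero, sub_zero, map_zero]⟩
  add_mem' := by
    rintro a b ⟨ha, ha'⟩ ⟨hb, hb'⟩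
    exact ⟨g.add_mem ha hb, fun y hy => by
      have h1 := ha' y hy
      have h2 := hb' y hy
      rw [Ring.lie_def] at h1 h2 ⊢
      rw [add_mul, mul_add, add_sub_add_comm, map_add, h1, h2, add_zero]⟩
  smul_mem' := by
    rintro c a ⟨ha, ha'⟩
    exact ⟨g.smul_mem c ha, fun y hy => by
      have h1 := ha' y hy
      rw [Ring.lie_def] at h1 ⊢
      rw [smul_mul_assoc, mul_smul_comm, ← smul_sub, map_smul, h1, smul_zero]⟩

/-- The index of the Lie algebra `g`: the minimum over all functionals of the
dimension of the kernel of the corresponding Kirillov form. -/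
def lieIndex {n : ℕ} (g : Submodule ℂ (M n)) : ℕ :=
  sInf {d : ℕ | ∃ F : M n →ₗ[ℂ] ℂ, d = Module.finrank ℂ ↥(kirKer g F)}

/-- The underlying undirected graph of the directed graph `Γ_{F_S}`. -/
def gammaGraph {n : ℕ} (S : Finset (Fin n × Fin n)) : SimpleGraph (Fin n) where
  Adj p q := p ≠ q ∧ ((p, q) ∈ S ∨ (q, p) ∈ S)
  symm := ⟨fun p q h => ⟨h.1.symm, h.2.symm⟩⟩
  loopless := ⟨fun p h => h.1 rfl⟩

/-- `F_S` is small: `S` consists of strict relations of the poset and `Γ_{F_S}`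
is a spanning tree of the comparability graph. -/
def Small {n : ℕ} (le : Fin n → Fin n → Prop) (S : Finset (Fin n × Fin n)) : Prop :=
  (∀ pq ∈ S, Strict le pq.1 pq.2) ∧ (gammaGraph S).IsTree

/-- `U_{F_S}(P)`: the sinks of `Γ_{F_S}`. -/
def sinks {n : ℕ} (S : Finset (Fin n × Fin n)) : Set (Fin n) :=
  {p | (∃ q, (q, p) ∈ S) ∧ ∀ q, (p, q) ∉ S}

/-- `D_{F_S}(P)`: the sources of `Γ_{F_S}`. -/
def sources {n : ℕ} (S : Finset (Fin n × Fin n)) : Set (Fin n) :=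
  {p | (∃ q, (p, q) ∈ S) ∧ ∀ q, (q, p) ∉ S}

/-- `B_{F_S}(P)`: the vertices of `Γ_{F_S}` that are neither sinks nor sources. -/
def betweens {n : ℕ} (S : Finset (Fin n × Fin n)) : Set (Fin n) :=
  {p | (∃ q, (p, q) ∈ S) ∧ ∃ q, (q, p) ∈ S}

/-- `U` is a filter (up-closed set) of the poset. -/
def IsPosetFilter {n : ℕ} (le : Fin n → Fin n → Prop) (U : Set (Fin n)) : Prop :=
  ∀ p ∈ U, ∀ q, le p q → q ∈ U

/-- `D` is an order ideal (down-closed set) of the poset. -/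
def IsPosetIdeal {n : ℕ} (le : Fin n → Fin n → Prop) (D : Set (Fin n)) : Prop :=
  ∀ p ∈ D, ∀ q, le q p → q ∈ D

/-- Helper to build elements of `Fin n` from natural numbers. -/
def fmk (n : ℕ) (h : 0 < n) (i : ℕ) : Fin n := ⟨i % n, Nat.mod_lt _ h⟩

/-- Restriction of a matrix along an embedding of index types. -/
def restrictMat {N K : ℕ} (f : Fin K → Fin N) (B : M N) : M K :=
  Matrix.of fun p q => B (f p) (f q)

/-- The poset `P₃ = {p₁,…,p₆}` generated by `p₁ ≼ p₂ ≼ p₃, p₄`, `p₃ ≼ p₅`,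
`p₄ ≼ p₆` (elements `pᵢ` indexed as `i - 1 : Fin 6`). -/
def leP3 : Fin 6 → Fin 6 → Prop := fun p q =>
  p = q ∨ (p.val, q.val) ∈
    ({(0,1),(0,2),(0,3),(0,4),(0,5),(1,2),(1,3),(1,4),(1,5),(2,4),(3,5)} : Set (ℕ × ℕ))

/-- The index set of
`F = E*_{p₁,p₅} + E*_{p₁,p₆} + E*_{p₂,p₃} + E*_{p₂,p₄} + E*_{p₂,p₆}`. -/
def SP3 : Finset (Fin 6 × Fin 6) := {(0,4),(0,5),(1,2),(1,3),(1,5)}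

/-!
Grade `P` by levels `ℓ = (1, 1, 0, 0, 0, 0)`. Every edge of `Γ_F` runs from level `1` to
level `0`, so the trace-zero diagonal matrix `F̂ = diag(ℓ) - 1/3` satisfies `F⁅F̂, y⁆ = F y`,
and it is the principal element once `F` is Frobenius. Since `ad F̂` scales `E_{pq}` by
`ℓ p - ℓ q`, its eigenspaces in `g_A(P)` are cut out by supports: for `1` the eight units
`E_{pq}` with `p ∈ {p₁, p₂}`, `q ∉ {p₁, p₂}`; for `0` the level-preserving units
`E_{p₁p₂}, E_{p₃p₅}, E_{p₄p₆}` and the five trace-zero diagonal directions.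

Frobeniusness is a direct computation: the identity is central, so an element `x` of the
kernel of `B_F` also pairs to zero with every `E_{pq}`, `p ≼ q`, and these sixteen equations
force `x = 0`.
-/

section Supported

variable {R : Type*} [Semiring R] {m n : Type*}

def supportedOn (s : m → n → Prop) : Submodule R (Matrix m n R) where
  carrier := {A | ∀ i j, ¬ s i j → A i j = 0}
  add_mem' hA hB i j h := by simp [hA i j h, hB i j h]
  zero_mem' _ _ _ := rfl
  smul_mem' c _ hA i j h := by simp [hA i j h]

@[simp]
theorem mem_supportedOn {s : m → n → Prop} {A : Matrix m n R} :
    A ∈ supportedOn s ↔ ∀ i j, ¬ s i j → A i j = 0 :=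
  Iff.rfl

theorem supportedOn_inf_supportedOn (s t : m → n → Prop) :
    supportedOn (R := R) s ⊓ supportedOn t = supportedOn fun i j => s i j ∧ t i j := by
  ext A
  simp only [Submodule.mem_inf, mem_supportedOn, not_and_or]
  exact ⟨fun ⟨hs, ht⟩ i j h => h.elim (hs i j) (ht i j),
    fun h => ⟨fun i j hs => h i j (.inl hs), fun i j ht => h i j (.inr ht)⟩⟩

def supportedOnEquiv (s : m → n → Prop) [∀ i j, Decidable (s i j)] :
    supportedOn (R := R) s ≃ₗ[R] ({p : m × n // s p.1 p.2} → R) where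
  toFun A p := A.1 p.1.1 p.1.2
  map_add' _ _ := rfl
  map_smul' _ _ := rfl
  invFun c := ⟨Matrix.of fun i j => if h : s i j then c ⟨(i, j), h⟩ else 0,
    fun i j h => by simp [h]⟩
  left_inv A := by
    ext i j
    by_cases h : s i j
    · simp [h]
    · simp [h, A.2 i j h]
  right_inv c := funext fun p => by simp [p.2]

end Supported

theorem supportedOn_le_ker_trace {R n : Type*} [CommSemiring R] [Fintype n] {s : n → n → Prop}
    (hs : ∀ i, ¬ s i i) : supportedOn s ≤ LinearMap.ker (Matrix.traceLinearMap n R R) :=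
  fun _ hA => Finset.sum_eq_zero fun i _ => hA i i (hs i)

section Finrank

variable {K : Type*} [Field K]

theorem finrank_supportedOn {m n : Type*} [Fintype m] [Fintype n] (s : m → n → Prop)
    [∀ i j, Decidable (s i j)] :
    Module.finrank K (supportedOn (R := K) s) = Fintype.card {p : m × n // s p.1 p.2} := by
  rw [(supportedOnEquiv s).finrank_eq, Module.finrank_fintype_fun_eq_card]

theorem finrank_inf_ker_add_one {V : Type*} [AddCommGroup V] [Module K V] [FiniteDimensional K V]
    {p : Submodule K V} {f : Module.Dual K V} {x : V} (hx : x ∈ p) (hfx : f x ≠ 0) :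
    Module.finrank K ↥(p ⊓ LinearMap.ker f) + 1 = Module.finrank K p := by
  have hf : f.domRestrict p ≠ 0 := fun h => hfx (LinearMap.congr_fun h ⟨x, hx⟩)
  rw [← Module.Dual.finrank_ker_add_one_of_ne_zero hf, LinearMap.ker_domRestrict,
    ← (Submodule.comapSubtypeEquivOfLe (inf_le_left : p ⊓ LinearMap.ker f ≤ p)).finrank_eq,
    Submodule.comap_inf, Submodule.comap_subtype_self, top_inf_eq]

theorem finrank_supportedOn_inf_ker_trace_add_one {n : Type*} [Fintype n] [DecidableEq n]
    (s : n → n → Prop) [∀ i j, Decidable (s i j)] {i : n} (hi : s i i) :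
    Module.finrank K ↥(supportedOn s ⊓ LinearMap.ker (Matrix.traceLinearMap n K K)) + 1 =
      Fintype.card {p : n × n // s p.1 p.2} := by
  rw [← finrank_supportedOn (K := K)]
  refine finrank_inf_ker_add_one (x := Matrix.single i i 1) (fun a b hab => ?_) (by simp)
  rw [Matrix.single_apply, if_neg]
  rintro ⟨rfl, rfl⟩
  exact hab hi

end Finrank

section LiePosetAlgebra

variable {n : ℕ} {le : Fin n → Fin n → Prop}

theorem gFull_eq_supportedOn :
    gFull le = supportedOn fun i j => i = j ∨ le i j := by
  ext A
  simp only [mem_supportedOn, not_or, and_imp]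
  rfl

theorem mem_gA_iff {A : M n} : A ∈ gA le ↔ A ∈ gFull le ∧ A.trace = 0 :=
  and_comm

theorem gA_eq_supportedOn_inf_ker_trace :
    gA le = (supportedOn fun i j => i = j ∨ le i j) ⊓
      LinearMap.ker (Matrix.traceLinearMap (Fin n) ℂ ℂ) := by
  ext A
  rw [mem_gA_iff, gFull_eq_supportedOn, Submodule.mem_inf, LinearMap.mem_ker,
    Matrix.traceLinearMap_apply]

theorem single_mem_gFull {p q : Fin n} (h : le p q) (c : ℂ) : Matrix.single p q c ∈ gFull le :=
  fun i j hij hle => by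
    rw [Matrix.single_apply, if_neg]
    rintro ⟨rfl, rfl⟩
    exact hle h

theorem diagonal_mem_gA {d : Fin n → ℂ} (hd : ∑ i, d i = 0) : Matrix.diagonal d ∈ gA le :=
  ⟨by rwa [Matrix.trace_diagonal], fun _ _ hij _ => Matrix.diagonal_apply_ne d hij⟩

theorem adE_diagonal_apply (d : Fin n → ℂ) (A : M n) (i j : Fin n) :
    adE (Matrix.diagonal d) A i j = (d i - d j) * A i j := by
  simp [adE]
  ring

theorem eigenspace_adE_diagonal (d : Fin n → ℂ) (μ : ℂ) :
    Module.End.eigenspace (adE (Matrix.diagonal d)) μ = supportedOn fun i j => d i - d j = μ := by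
  ext A
  simp only [Module.End.mem_eigenspace_iff, mem_supportedOn, ← Matrix.ext_iff,
    adE_diagonal_apply, Matrix.smul_apply, smul_eq_mul, ← sub_eq_zero (b := μ * _), ← sub_mul,
    mul_eq_zero, sub_eq_zero, or_iff_not_imp_left]

theorem gA_inf_eigenspace_adE_diagonal (d : Fin n → ℂ) (μ : ℂ) :
    gA le ⊓ Module.End.eigenspace (adE (Matrix.diagonal d)) μ =
      (supportedOn fun i j => (i = j ∨ le i j) ∧ d i - d j = μ) ⊓
        LinearMap.ker (Matrix.traceLinearMap (Fin n) ℂ ℂ) := by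
  rw [gA_eq_supportedOn_inf_ker_trace, eigenspace_adE_diagonal, inf_right_comm,
    supportedOn_inf_supportedOn]

theorem gA_inf_eigenspace_adE_diagonal_intCast (ℓ : Fin n → ℤ) (c : ℂ) (k : ℤ) :
    gA le ⊓ Module.End.eigenspace (adE (Matrix.diagonal fun i => (ℓ i : ℂ) - c)) k =
      (supportedOn fun i j => (i = j ∨ le i j) ∧ ℓ i - ℓ j = k) ⊓
        LinearMap.ker (Matrix.traceLinearMap (Fin n) ℂ ℂ) := by
  simp only [gA_inf_eigenspace_adE_diagonal, sub_sub_sub_cancel_right, ← Int.cast_sub,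
    Int.cast_inj]

end LiePosetAlgebra

attribute [local instance] LieRing.ofAssociativeRing

section Kirillov

variable {n : ℕ}

theorem IsPrincipal.eq {g : Submodule ℂ (M n)} {F : M n →ₗ[ℂ] ℂ} {H H' : M n}
    (hF : IsFrobeniusOn g F) (hH : IsPrincipal g F H) (hH' : IsPrincipal g F H') : H = H' :=
  sub_eq_zero.mp <| hF _ (g.sub_mem hH.1 hH'.1) fun y hy => by
    rw [sub_lie, map_sub, hH.2 y hy, hH'.2 y hy, sub_self]

theorem lie_eq_adE (H A : M n) : ⁅H, A⁆ = adE H A :=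
  rfl

theorem FS_diagonal_lie {S : Finset (Fin n × Fin n)} {d : Fin n → ℂ}
    (hd : ∀ pq ∈ S, d pq.1 - d pq.2 = 1) (y : M n) : FS S ⁅Matrix.diagonal d, y⁆ = FS S y :=
  Finset.sum_congr rfl fun pq hpq => by
    rw [lie_eq_adE, adE_diagonal_apply, hd pq hpq, one_mul]

theorem lie_eq_zero_of_forall_gA [NeZero n] {le : Fin n → Fin n → Prop} {F : M n →ₗ[ℂ] ℂ}
    {x : M n} (hx : ∀ y ∈ gA le, F ⁅x, y⁆ = 0) {y : M n} (hy : y ∈ gFull le) :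
    F ⁅x, y⁆ = 0 := by
  set c : ℂ := y.trace / n
  have hc : y - c • 1 ∈ gA le := by
    refine mem_gA_iff.2 ⟨(gFull le).sub_mem hy ((gFull le).smul_mem c ?_), ?_⟩
    · exact fun i j hij _ => Matrix.one_apply_ne hij
    · rw [Matrix.trace_sub, Matrix.trace_smul, Matrix.trace_one, Fintype.card_fin, smul_eq_mul,
        div_mul_cancel₀ _ (Nat.cast_ne_zero.2 (NeZero.ne n)), sub_self]
  simpa only [lie_sub, lie_smul, (Commute.one_right x).lie_eq, smul_zero, sub_zero] using hx _ hc

end Kirillov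

instance : DecidableRel leP3 := fun _ _ => inferInstanceAs (Decidable (_ ∨ _))

theorem FS_SP3_apply (A : M 6) : FS SP3 A = A 0 4 + A 0 5 + A 1 2 + A 1 3 + A 1 5 := by
  simp [FS, SP3, Finset.sum_insert, add_assoc]

theorem offDiag_eq_zero_of_forall_FS_SP3_lie_single {x : M 6} (hx : x ∈ gFull leP3)
    (he : ∀ p q, leP3 p q → FS SP3 ⁅x, Matrix.single p q 1⁆ = 0) :
    ∀ i j, i ≠ j → x i j = 0 := by
  rw [gFull_eq_supportedOn, mem_supportedOn] at hx
  have e00 := he 0 0 (by decide)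
  have e22 := he 2 2 (by decide)
  have e33 := he 3 3 (by decide)
  have e44 := he 4 4 (by decide)
  have e55 := he 5 5 (by decide)
  have e01 := he 0 1 (by decide)
  have e02 := he 0 2 (by decide)
  have e03 := he 0 3 (by decide)
  have e14 := he 1 4 (by decide)
  have e24 := he 2 4 (by decide)
  have e35 := he 3 5 (by decide)
  simp (disch := decide) only [FS_SP3_apply, Ring.lie_def, Matrix.sub_apply,
    Matrix.mul_single_apply_same, Matrix.single_mul_apply_same, Matrix.mul_single_apply_of_ne,
    Matrix.single_mul_apply_of_ne, hx, mul_one, one_mul, sub_self, sub_zero, zero_sub, add_zero,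
    zero_add, neg_eq_zero] at e00 e22 e33 e44 e55 e01 e02 e03 e14 e24 e35
  have h05 : x 0 5 = 0 := by linear_combination -e00 - e44
  have h15 : x 1 5 = 0 := by linear_combination e55 - h05
  have h14 : x 1 4 = 0 := by linear_combination -e01 - h15
  have h03 : x 0 3 = 0 := by linear_combination e35 - e33
  intro i j hij
  fin_cases i <;> fin_cases j <;>
    first | exact absurd rfl hij | exact hx _ _ (by decide) | assumption

theorem eq_zero_of_forall_FS_SP3_lie_single {x : M 6} (hx : x ∈ gA leP3)
    (he : ∀ p q, leP3 p q → FS SP3 ⁅x, Matrix.single p q 1⁆ = 0) : x = 0 := by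
  obtain ⟨hsupp, htr⟩ := mem_gA_iff.1 hx
  have hoff := offDiag_eq_zero_of_forall_FS_SP3_lie_single hsupp he
  have e04 := he 0 4 (by decide)
  have e05 := he 0 5 (by decide)
  have e12 := he 1 2 (by decide)
  have e13 := he 1 3 (by decide)
  have e15 := he 1 5 (by decide)
  simp (disch := decide) only [FS_SP3_apply, Ring.lie_def, Matrix.sub_apply,
    Matrix.mul_single_apply_same, Matrix.single_mul_apply_same, Matrix.mul_single_apply_of_ne,
    Matrix.single_mul_apply_of_ne, hoff, mul_one, one_mul, sub_self, add_zero, zero_add,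
    sub_eq_zero] at e04 e05 e12 e13 e15
  have htr' : x 0 0 + x 1 1 + x 2 2 + x 3 3 + x 4 4 + x 5 5 = 0 := by
    simpa [Matrix.trace, Fin.sum_univ_six, add_assoc] using htr
  have h00 : x 0 0 = 0 := by
    linear_combination (htr' + e04 + 4 * e05 - 3 * e15 + e12 + e13) / 6
  have h11 : x 1 1 = 0 := by linear_combination e15 - e05 + h00
  have h22 : x 2 2 = 0 := by linear_combination h11 - e12
  have h33 : x 3 3 = 0 := by linear_combination h11 - e13
  have h44 : x 4 4 = 0 := by linear_combination h00 - e04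
  have h55 : x 5 5 = 0 := by linear_combination h00 - e05
  ext i j
  fin_cases i <;> fin_cases j <;> first | exact hoff _ _ (by decide) | assumption

theorem isFrobeniusOn_P3 : IsFrobeniusOn (gA leP3) (FS SP3) := fun _ hx hB =>
  eq_zero_of_forall_FS_SP3_lie_single hx fun _ _ h =>
    lie_eq_zero_of_forall_gA hB (single_mem_gFull h 1)

def level : Fin 6 → ℤ := ![1, 1, 0, 0, 0, 0]

def principalP3 : M 6 := Matrix.diagonal fun i => (level i : ℂ) - 1 / 3

theorem isPrincipal_principalP3 : IsPrincipal (gA leP3) (FS SP3) principalP3 := by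
  refine ⟨diagonal_mem_gA ?_, fun y _ => FS_diagonal_lie (fun pq hpq => ?_) y⟩
  · simp [level, Fin.sum_univ_six]
    norm_num
  · have hlevel : ∀ pq ∈ SP3, level pq.1 - level pq.2 = 1 := by decide
    rw [sub_sub_sub_cancel_right]
    exact_mod_cast hlevel pq hpq

theorem finrank_gA_P3 : Module.finrank ℂ ↥(gA leP3) = 16 := by
  rw [gA_eq_supportedOn_inf_ker_trace]
  refine Nat.add_right_cancel ((finrank_supportedOn_inf_ker_trace_add_one _ (i := 0) ?_).trans ?_)
  all_goals decide

theorem eigMult_principalP3_zero : eigMult (gA leP3) principalP3 0 = 8 := by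
  rw [eigMult, principalP3, ← Int.cast_zero, gA_inf_eigenspace_adE_diagonal_intCast]
  refine Nat.add_right_cancel ((finrank_supportedOn_inf_ker_trace_add_one _ (i := 0) ?_).trans ?_)
  all_goals decide

theorem eigMult_principalP3_one : eigMult (gA leP3) principalP3 1 = 8 := by
  rw [eigMult, principalP3, ← Int.cast_one, gA_inf_eigenspace_adE_diagonal_intCast,
    inf_of_le_left (supportedOn_le_ker_trace (by decide)), finrank_supportedOn]
  decide

/-- `F` is Frobenius on `g_A(P₃)` and the spectrum is binary:
eigenvalues `0` and `1`, each with multiplicity `8`. -/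
theorem P3_frobenius_binary_spectrum :
    IsFrobeniusOn (gA leP3) (FS SP3) ∧
    ∀ H : M 6, IsPrincipal (gA leP3) (FS SP3) H →
      eigMult (gA leP3) H 0 = 8 ∧ eigMult (gA leP3) H 1 = 8 ∧
      eigMult (gA leP3) H 0 + eigMult (gA leP3) H 1 = Module.finrank ℂ ↥(gA leP3) := by
  refine ⟨isFrobeniusOn_P3, fun H hH => ?_⟩
  obtain rfl := hH.eq isFrobeniusOn_P3 isPrincipal_principalP3
  rw [eigMult_principalP3_zero, eigMult_principalP3_one, finrank_gA_P3]
  exact ⟨rfl, rfl, rfl⟩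

end
end LiePosets
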